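/- arXiv:2204.07048 — 2 statements merged into one kernel-verified Lean document; each statement's English description precedes it below -/
import Mathlib

section
/- Let M = (A,B;C,D) be a 2n×2n real free symplectic matrix, f ∈ L²(ℝⁿ), and φ ∈ L²(ℝⁿ) a window function. Define H(x) = |det B|^{−1/2} · exp(i·xᵀB⁻¹Ax/2) · f(x). Then for all w, u ∈ ℝⁿ, the short-time NSLCT satisfies V^M_φ[f](w,u) = exp(i·wᵀDB⁻¹w/2) · V_φ[H](B⁻¹w, u), where V_φ denotes the short-time Fourier transform. -/
open MeasureTheory Matrix
open scoped BigOperators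

noncomputable section

def FreeSymplectic {n : ℕ} (A B C D : Matrix (Fin n) (Fin n) ℝ) : Prop :=
  A * Bᵀ = B * Aᵀ ∧ C * Dᵀ = D * Cᵀ ∧ A * Dᵀ - B * Cᵀ = 1 ∧ B.det ≠ 0

def nsKer {n : ℕ} (A B D : Matrix (Fin n) (Fin n) ℝ) (x w : Fin n → ℝ) : ℂ :=
  (((2 * Real.pi) ^ (-(n : ℝ) / 2) * |B.det| ^ (-(1 : ℝ) / 2) : ℝ) : ℂ) *
    Complex.exp ((Complex.I / 2) *
      ((w ⬝ᵥ ((D * B⁻¹) *ᵥ w) - 2 * (w ⬝ᵥ ((B⁻¹)ᵀ *ᵥ x)) + x ⬝ᵥ ((B⁻¹ * A) *ᵥ x) : ℝ) : ℂ))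

/-- The short-time NSLCT `V^M_φ[f](w, u)`. -/
def stNslct {n : ℕ} (A B D : Matrix (Fin n) (Fin n) ℝ) (φ f : (Fin n → ℝ) → ℂ)
    (w u : Fin n → ℝ) : ℂ :=
  ∫ x, f x * (starRingEnd ℂ) (φ (x - u)) * nsKer A B D x w

/-- The short-time Fourier transform `V_φ[f](w, u)`. -/
def stft {n : ℕ} (φ f : (Fin n → ℝ) → ℂ) (w u : Fin n → ℝ) : ℂ :=
  (((2 * Real.pi) ^ (-(n : ℝ) / 2) : ℝ) : ℂ) *
    ∫ x, f x * (starRingEnd ℂ) (φ (x - u)) * Complex.exp (-Complex.I * ((w ⬝ᵥ x : ℝ) : ℂ))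

theorem nsKer_eq_chirp_mul_fourierChar {n : ℕ} (A B D : Matrix (Fin n) (Fin n) ℝ)
    (x w : Fin n → ℝ) :
    nsKer A B D x w =
      Complex.exp ((Complex.I / 2) * ((w ⬝ᵥ ((D * B⁻¹) *ᵥ w) : ℝ) : ℂ)) *
        ((((2 * Real.pi) ^ (-(n : ℝ) / 2) : ℝ) : ℂ) *
          (((|B.det| ^ (-(1 : ℝ) / 2) : ℝ) : ℂ) *
            Complex.exp ((Complex.I / 2) * ((x ⬝ᵥ ((B⁻¹ * A) *ᵥ x) : ℝ) : ℂ)) *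
            Complex.exp (-Complex.I * (((B⁻¹ *ᵥ w) ⬝ᵥ x : ℝ) : ℂ)))) := by
  have hcross : w ⬝ᵥ ((B⁻¹)ᵀ *ᵥ x) = (B⁻¹ *ᵥ w) ⬝ᵥ x := by
    rw [dotProduct_transpose_mulVec, dotProduct_comm]
  have hphase : (Complex.I / 2) *
      ((w ⬝ᵥ ((D * B⁻¹) *ᵥ w) - 2 * (w ⬝ᵥ ((B⁻¹)ᵀ *ᵥ x)) + x ⬝ᵥ ((B⁻¹ * A) *ᵥ x) : ℝ) : ℂ) =
      (Complex.I / 2) * ((w ⬝ᵥ ((D * B⁻¹) *ᵥ w) : ℝ) : ℂ) +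
        -Complex.I * (((B⁻¹ *ᵥ w) ⬝ᵥ x : ℝ) : ℂ) +
        (Complex.I / 2) * ((x ⬝ᵥ ((B⁻¹ * A) *ᵥ x) : ℝ) : ℂ) := by
    rw [← hcross]; push_cast; ring
  rw [nsKer, hphase, Complex.exp_add, Complex.exp_add]
  push_cast
  ring

theorem stNslct_eq_stft_of_chirp_general {n : ℕ}
    (A B D : Matrix (Fin n) (Fin n) ℝ)
    (f φ : (Fin n → ℝ) → ℂ)
    (H : (Fin n → ℝ) → ℂ)
    (hH : ∀ x, H x = ((|B.det| ^ (-(1 : ℝ) / 2) : ℝ) : ℂ) *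
      Complex.exp ((Complex.I / 2) * ((x ⬝ᵥ ((B⁻¹ * A) *ᵥ x) : ℝ) : ℂ)) * f x)
    (w u : Fin n → ℝ) :
    stNslct A B D φ f w u =
      Complex.exp ((Complex.I / 2) * ((w ⬝ᵥ ((D * B⁻¹) *ᵥ w) : ℝ) : ℂ)) *
        stft φ H (B⁻¹ *ᵥ w) u := by
  rw [stNslct, stft, ← integral_const_mul, ← integral_const_mul]
  congr 1 with x
  rw [nsKer_eq_chirp_mul_fourierChar, hH]
  ring

/-- relation between the short-time NSLCT and the short-time Fourier
transform of the chirped signal `H(x) = |det B|^{-1/2} exp(i xᵀ B⁻¹ A x / 2) f(x)`. -/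
theorem stNslct_eq_stft_of_chirp {n : ℕ} (hn : 1 ≤ n)
    (A B C D : Matrix (Fin n) (Fin n) ℝ) (hM : FreeSymplectic A B C D)
    (f φ : (Fin n → ℝ) → ℂ) (hf : MemLp f 2) (hφ : MemLp φ 2)
    (H : (Fin n → ℝ) → ℂ)
    (hH : ∀ x, H x = ((|B.det| ^ (-(1 : ℝ) / 2) : ℝ) : ℂ) *
      Complex.exp ((Complex.I / 2) * ((x ⬝ᵥ ((B⁻¹ * A) *ᵥ x) : ℝ) : ℂ)) * f x)
    (w u : Fin n → ℝ) :
    stNslct A B D φ f w u =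
      Complex.exp ((Complex.I / 2) * ((w ⬝ᵥ ((D * B⁻¹) *ᵥ w) : ℝ) : ℂ)) *
        stft φ H (B⁻¹ *ᵥ w) u :=
  stNslct_eq_stft_of_chirp_general A B D f φ H hH w u
end
end

section
/- Let M = (A,B;C,D) be a 2n×2n real free symplectic matrix, f ∈ L²(ℝⁿ), and φ ∈ L²(ℝⁿ) a window function. For fixed u ∈ ℝⁿ define F_u(x) = exp(i·xᵀB⁻¹Ax/2) · f(x) · conj(φ(x−u)). Then for all w ∈ ℝⁿ, |F[F_u](w)| = |det B|^{1/2} · |V^M_φ[f](Bw, u)|. -/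
open MeasureTheory Matrix
open scoped BigOperators

noncomputable section

def nFourier {n : ℕ} (f : (Fin n → ℝ) → ℂ) (w : Fin n → ℝ) : ℂ :=
  (((2 * Real.pi) ^ (-(n : ℝ) / 2) : ℝ) : ℂ) *
    ∫ x, f x * Complex.exp (-Complex.I * ((w ⬝ᵥ x : ℝ) : ℂ))

/-!
Substituting `w ↦ B w` in the kernel turns the cross term `wᵀB⁻ᵀx` into the Fourier phase `wᵀx`,
so the kernel splits into a unimodular factor depending only on `w`, the chirp `exp(i xᵀB⁻¹Ax/2)`
absorbed into `F_u`, and the Fourier kernel; the normalisations differ by `|det B|^{-1/2}`.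
-/

theorem Matrix.mulVec_dotProduct_inv_transpose_mulVec {m R : Type*} [Fintype m] [DecidableEq m]
    [CommRing R] {B : Matrix m m R} (hB : IsUnit B.det) (w x : m → R) :
    (B *ᵥ w) ⬝ᵥ ((B⁻¹)ᵀ *ᵥ x) = w ⬝ᵥ x := by
  rw [dotProduct_mulVec, vecMul_transpose, mulVec_mulVec, nonsing_inv_mul B hB, one_mulVec]

def chirp {n : ℕ} (P : Matrix (Fin n) (Fin n) ℝ) (x : Fin n → ℝ) : ℂ :=
  Complex.exp ((Complex.I / 2) * ((x ⬝ᵥ (P *ᵥ x) : ℝ) : ℂ))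

theorem norm_chirp {n : ℕ} (P : Matrix (Fin n) (Fin n) ℝ) (x : Fin n → ℝ) : ‖chirp P x‖ = 1 := by
  simp [chirp, Complex.norm_exp, Complex.mul_re]

section Kernel

variable {n : ℕ} {A B D : Matrix (Fin n) (Fin n) ℝ}

theorem nsKer_mulVec (hB : B.det ≠ 0) (x w : Fin n → ℝ) :
    nsKer A B D x (B *ᵥ w) =
      ((|B.det| ^ (-(1 : ℝ) / 2) : ℝ) : ℂ) * chirp (D * B⁻¹) (B *ᵥ w) *
        ((((2 * Real.pi) ^ (-(n : ℝ) / 2) : ℝ) : ℂ) *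
          (chirp (B⁻¹ * A) x * Complex.exp (-Complex.I * ((w ⬝ᵥ x : ℝ) : ℂ)))) := by
  rw [nsKer, mulVec_dotProduct_inv_transpose_mulVec (isUnit_iff_ne_zero.mpr hB), chirp, chirp,
    ← Complex.exp_add, mul_mul_mul_comm, ← Complex.exp_add]
  congr 1
  · push_cast; ring
  · congr 1; push_cast; ring

theorem stNslct_mulVec (hB : B.det ≠ 0) (φ f : (Fin n → ℝ) → ℂ) (w u : Fin n → ℝ) :
    stNslct A B D φ f (B *ᵥ w) u =
      ((|B.det| ^ (-(1 : ℝ) / 2) : ℝ) : ℂ) * chirp (D * B⁻¹) (B *ᵥ w) *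
        nFourier (fun x ↦ chirp (B⁻¹ * A) x * f x * (starRingEnd ℂ) (φ (x - u))) w := by
  simp_rw [stNslct, nFourier, nsKer_mulVec hB, ← integral_const_mul]
  congr 1 with x
  ring

theorem norm_stNslct_mulVec (hB : B.det ≠ 0) (φ f : (Fin n → ℝ) → ℂ) (w u : Fin n → ℝ) :
    ‖stNslct A B D φ f (B *ᵥ w) u‖ = |B.det| ^ (-(1 : ℝ) / 2) *
      ‖nFourier (fun x ↦ chirp (B⁻¹ * A) x * f x * (starRingEnd ℂ) (φ (x - u))) w‖ := by
  rw [stNslct_mulVec hB, norm_mul, norm_mul, norm_chirp, mul_one, Complex.norm_real,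
    Real.norm_of_nonneg (by positivity)]

end Kernel

theorem abs_fourier_windowed_chirp_general {n : ℕ}
    (A B C D : Matrix (Fin n) (Fin n) ℝ) (hM : FreeSymplectic A B C D)
    (f φ : (Fin n → ℝ) → ℂ)
    (u : Fin n → ℝ) (Fu : (Fin n → ℝ) → ℂ)
    (hFu : ∀ x, Fu x = Complex.exp ((Complex.I / 2) * ((x ⬝ᵥ ((B⁻¹ * A) *ᵥ x) : ℝ) : ℂ)) *
      f x * (starRingEnd ℂ) (φ (x - u)))
    (w : Fin n → ℝ) :
    ‖nFourier Fu w‖ = |B.det| ^ ((1 : ℝ) / 2) * ‖stNslct A B D φ f (B *ᵥ w) u‖ := by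
  have hB : B.det ≠ 0 := hM.2.2.2
  have hFu' : Fu = fun x ↦ chirp (B⁻¹ * A) x * f x * (starRingEnd ℂ) (φ (x - u)) := funext hFu
  rw [norm_stNslct_mulVec hB, ← hFu', ← mul_assoc, ← Real.rpow_add (abs_pos.mpr hB)]
  norm_num

/-- for `F_u(x) = exp(i xᵀB⁻¹Ax/2) f(x) conj(φ(x-u))`, one has
`|F[F_u](w)| = |det B|^{1/2} |V^M_φ[f](Bw, u)|`. -/
theorem abs_fourier_windowed_chirp {n : ℕ} (hn : 1 ≤ n)
    (A B C D : Matrix (Fin n) (Fin n) ℝ) (hM : FreeSymplectic A B C D)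
    (f φ : (Fin n → ℝ) → ℂ) (hf : MemLp f 2) (hφ : MemLp φ 2)
    (u : Fin n → ℝ) (Fu : (Fin n → ℝ) → ℂ)
    (hFu : ∀ x, Fu x = Complex.exp ((Complex.I / 2) * ((x ⬝ᵥ ((B⁻¹ * A) *ᵥ x) : ℝ) : ℂ)) *
      f x * (starRingEnd ℂ) (φ (x - u)))
    (w : Fin n → ℝ) :
    ‖nFourier Fu w‖ = |B.det| ^ ((1 : ℝ) / 2) * ‖stNslct A B D φ f (B *ᵥ w) u‖ :=
  abs_fourier_windowed_chirp_general A B C D hM f φ u Fu hFu w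
end
end
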